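/- arXiv:2209.00686 — 5 statements merged into one kernel-verified Lean document; each statement's English description precedes it below -/
import Mathlib

section
/- Let κ be a closure operator, let D ⊆ L be κ-coherent, and let B be a nonempty subset of Ω. Then the conditional set D|B := D ∩ L|B is κ-coherent relative to L|B, where L|B := {f ∈ L : f = 1_B·f} is the set of gambles vanishing outside B; that is, D|B avoids partial loss and L|B ∩ E_κ(D|B) ⊆ D|B. -/
open Set

/-- The set of gambles: bounded real-valued functions on `Ω`. -/
def Gambles (Ω : Type*) : Set (Ω → ℝ) := {f | ∃ M : ℝ, ∀ ω, |f ω| ≤ M}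

/-- `L⁺`: the positive gambles. -/
def Lpos (Ω : Type*) : Set (Ω → ℝ) := {f ∈ Gambles Ω | 0 ≤ f ∧ f ≠ 0}

/-- `L⁻₀`: the nonpositive gambles. -/
def Lneg0 (Ω : Type*) : Set (Ω → ℝ) := {f ∈ Gambles Ω | f ≤ 0}

/-- A closure operator on the subsets of the set of gambles. -/
structure IsClosureOp (Ω : Type*) (κ : Set (Ω → ℝ) → Set (Ω → ℝ)) : Prop where
  maps_to : ∀ D ⊆ Gambles Ω, κ D ⊆ Gambles Ω
  extensive : ∀ D ⊆ Gambles Ω, D ⊆ κ D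
  mono : ∀ ⦃D D' : Set (Ω → ℝ)⦄, D ⊆ Gambles Ω → D' ⊆ Gambles Ω → D ⊆ D' → κ D ⊆ κ D'
  idem : ∀ D ⊆ Gambles Ω, κ (κ D) = κ D

/-- Natural extension `E_κ(D) = κ(D ∪ L⁺)`. -/
def natExt {Ω : Type*} (κ : Set (Ω → ℝ) → Set (Ω → ℝ)) (D : Set (Ω → ℝ)) : Set (Ω → ℝ) :=
  κ (D ∪ Lpos Ω)

/-- `D` avoids partial loss: `L⁻₀ ∩ E_κ(D) = ∅`. -/
def AvoidsPartialLoss {Ω : Type*} (κ : Set (Ω → ℝ) → Set (Ω → ℝ)) (D : Set (Ω → ℝ)) : Prop :=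
  Lneg0 Ω ∩ natExt κ D = ∅

/-- `D` is κ-coherent relative to `Q`. -/
def CoherentRel {Ω : Type*} (κ : Set (Ω → ℝ) → Set (Ω → ℝ)) (Q D : Set (Ω → ℝ)) : Prop :=
  AvoidsPartialLoss κ D ∧ Q ∩ natExt κ D ⊆ D

/-- `D` is κ-coherent: `κ(D ∪ L⁺) = D` and `D ∩ L⁻₀ = ∅`. -/
def Coherent {Ω : Type*} (κ : Set (Ω → ℝ) → Set (Ω → ℝ)) (D : Set (Ω → ℝ)) : Prop :=
  D ⊆ Gambles Ω ∧ κ (D ∪ Lpos Ω) = D ∧ D ∩ Lneg0 Ω = ∅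

/-- A set of gambles is closed under dominance. -/
def ClosedUnderDominance {Ω : Type*} (G : Set (Ω → ℝ)) : Prop :=
  G = {g | g ∈ Gambles Ω ∧ ∃ f ∈ G, f ≤ g}

/-- `K_d`: closure operators all of whose coherent sets are closed under dominance. -/
def InKd {Ω : Type*} (κ : Set (Ω → ℝ) → Set (Ω → ℝ)) : Prop :=
  IsClosureOp Ω κ ∧ ∀ D : Set (Ω → ℝ), Coherent κ D → ClosedUnderDominance D

/-- Lower prevision induced by `D`: `P_D(f) = sup {μ : f - μ ∈ D}`. -/
noncomputable def lowPrev {Ω : Type*} (D : Set (Ω → ℝ)) (f : Ω → ℝ) : ℝ :=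
  sSup {μ : ℝ | (f - fun _ => μ) ∈ D}

/-- Upper prevision induced by `D`: `Q_D(f) = inf {μ : μ - f ∈ D}`. -/
noncomputable def upPrev {Ω : Type*} (D : Set (Ω → ℝ)) (f : Ω → ℝ) : ℝ :=
  sInf {μ : ℝ | ((fun _ => μ) - f) ∈ D}

/-- `L|B`: the gambles vanishing outside `B`, i.e. with `f = 1_B·f`. -/
def Lcond {Ω : Type*} (B : Set Ω) : Set (Ω → ℝ) :=
  {f ∈ Gambles Ω | f = B.indicator f}

theorem union_Lpos_subset_gambles {Ω : Type*} {D : Set (Ω → ℝ)} (hD : D ⊆ Gambles Ω) :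
    D ∪ Lpos Ω ⊆ Gambles Ω :=
  union_subset hD fun _ hf => hf.1

theorem natExt_mono {Ω : Type*} {κ : Set (Ω → ℝ) → Set (Ω → ℝ)} (hκ : IsClosureOp Ω κ)
    {D D' : Set (Ω → ℝ)} (hD' : D' ⊆ Gambles Ω) (h : D ⊆ D') : natExt κ D ⊆ natExt κ D' :=
  hκ.mono (union_Lpos_subset_gambles (h.trans hD')) (union_Lpos_subset_gambles hD')
    (union_subset_union_left _ h)

theorem Coherent.natExt_subset_of_subset {Ω : Type*} {κ : Set (Ω → ℝ) → Set (Ω → ℝ)}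
    (hκ : IsClosureOp Ω κ) {D D' : Set (Ω → ℝ)} (hD : Coherent κ D) (h : D' ⊆ D) :
    natExt κ D' ⊆ D :=
  hD.2.1 ▸ natExt_mono hκ hD.1 h

theorem Coherent.coherentRel_inter {Ω : Type*} {κ : Set (Ω → ℝ) → Set (Ω → ℝ)}
    (hκ : IsClosureOp Ω κ) {D : Set (Ω → ℝ)} (hD : Coherent κ D) (Q : Set (Ω → ℝ)) :
    CoherentRel κ Q (D ∩ Q) := by
  have hext : natExt κ (D ∩ Q) ⊆ D := hD.natExt_subset_of_subset hκ inter_subset_left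
  refine ⟨eq_empty_of_forall_notMem fun f ⟨hneg, hf⟩ => ?_, fun f ⟨hQ, hf⟩ => ⟨hext hf, hQ⟩⟩
  exact hD.2.2.subset ⟨hext hf, hneg⟩

theorem stmt9_general {Ω : Type*} (κ : Set (Ω → ℝ) → Set (Ω → ℝ))
    (hκ : IsClosureOp Ω κ) (D : Set (Ω → ℝ)) (hD : Coherent κ D)
    (B : Set Ω) :
    CoherentRel κ (Lcond B) (D ∩ Lcond B) :=
  hD.coherentRel_inter hκ (Lcond B)

/-- the conditional set `D|B = D ∩ L|B` of a κ-coherent set `D` is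
κ-coherent relative to `L|B`. -/
theorem stmt9 {Ω : Type*} [Nonempty Ω] (κ : Set (Ω → ℝ) → Set (Ω → ℝ))
    (hκ : IsClosureOp Ω κ) (D : Set (Ω → ℝ)) (hD : Coherent κ D)
    (B : Set Ω) (hB : B.Nonempty) :
    CoherentRel κ (Lcond B) (D ∩ Lcond B) :=
  stmt9_general κ hκ D hD B
end

section
/- Let 𝓑 be a partition of Ω and let κ be a closure operator in K_d such that E_κ(G) ⊆ E_{κ₁}(G) for every G ⊆ L, where κ₁(G) := posi(G). Let D_𝓑 ⊆ L_𝓑 be κ₁-coherent relative to L_𝓑, for each B ∈ 𝓑 let D|B ⊆ L|B be κ₁-coherent relative to L|B, and set D|𝓑 := {f ∈ L : f ≠ 0 and for every B ∈ 𝓑, 1_B·f ∈ D|B ∪ {0}}. Then the marginal extension D' := E_κ(D_𝓑 ∪ D|𝓑) is κ-coherent. -/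
open Set

/-- `posi(G)`: positive linear combinations of elements of `G`; this is the linear
closure operator `κ₁`. -/
def posi {Ω : Type*} (G : Set (Ω → ℝ)) : Set (Ω → ℝ) :=
  {g | ∃ (n : ℕ) (f : Fin (n + 1) → Ω → ℝ) (l : Fin (n + 1) → ℝ),
    (∀ i, f i ∈ G) ∧ (∀ i, 0 < l i) ∧ g = ∑ i, l i • f i}

/-- `L_𝓑`: the gambles that are constant on every element of the partition `𝓑`. -/
def Lmeas {Ω : Type*} (𝓑 : Set (Set Ω)) : Set (Ω → ℝ) :=
  {f ∈ Gambles Ω | ∀ B ∈ 𝓑, ∀ ω ∈ B, ∀ ω' ∈ B, f ω = f ω'}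

/-- `D|𝓑`: the nonzero gambles `f` with `1_B·f ∈ D|B ∪ {0}` for every `B ∈ 𝓑`. -/
def condAgg {Ω : Type*} (𝓑 : Set (Set Ω)) (Dc : Set Ω → Set (Ω → ℝ)) : Set (Ω → ℝ) :=
  {f | f ∈ Gambles Ω ∧ f ≠ 0 ∧ ∀ B ∈ 𝓑, B.indicator f ∈ Dc B ∪ {0}}

/-!
Coherence relative to `L_𝓑` and to `L|B` makes `D_𝓑`, every `D|B` and hence `D|𝓑` convex cones,
so every gamble of `E_{κ₁}(D_𝓑 ∪ D|𝓑)` is `h + c + p` with `h ∈ D_𝓑 ∪ {0}`, `c ∈ D|𝓑 ∪ {0}`,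
`p ≥ 0`, one of them nonzero. Such a sum is never `≤ 0`. If `h ≠ 0`, then `h` is positive at a
point of some block `B` on which it is constant, so `1_B (h + c)` is `1_B c` plus a positive
constant on `B`, an element of `E_{κ₁}(D|B)`; if `h = 0` and `c ≠ 0`, then `1_B c ∈ D|B` for a
block `B` on which `c` does not vanish. Thus `D_𝓑 ∪ D|𝓑` avoids partial loss for `κ₁`, hence for
`κ` since `E_κ ⊆ E_{κ₁}`, and a natural extension avoiding partial loss is coherent for any
closure operator.
-/

namespace ConvexCone

variable {R M : Type*} [Semiring R] [PartialOrder R] [AddCommMonoid M] [Module R M]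
  {C C₁ C₂ : ConvexCone R M} {x y : M}

lemma add_mem_of_mem_union_zero (hx : x ∈ C) (hy : y ∈ (C : Set M) ∪ {0}) : x + y ∈ C := by
  rcases hy with hy | rfl
  · exact C.add_mem hx hy
  · rwa [add_zero]

lemma add_mem_union_zero (hx : x ∈ (C : Set M) ∪ {0}) (hy : y ∈ (C : Set M) ∪ {0}) :
    x + y ∈ (C : Set M) ∪ {0} := by
  rcases hx with hx | rfl
  · exact Or.inl (add_mem_of_mem_union_zero hx hy)
  · rwa [zero_add]

lemma smul_mem_union_zero {c : R} (hc : 0 < c) (hx : x ∈ (C : Set M) ∪ {0}) :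
    c • x ∈ (C : Set M) ∪ {0} := by
  rcases hx with hx | rfl
  · exact Or.inl (C.smul_mem hc hx)
  · exact Or.inr (smul_zero c)

lemma mem_sup_iff : x ∈ C₁ ⊔ C₂ ↔ ∃ y ∈ (C₁ : Set M) ∪ {0}, ∃ z ∈ (C₂ : Set M) ∪ {0},
    (y ∈ C₁ ∨ z ∈ C₂) ∧ y + z = x := by
  constructor
  · let J : ConvexCone R M :=
      { carrier := {x | ∃ y ∈ (C₁ : Set M) ∪ {0}, ∃ z ∈ (C₂ : Set M) ∪ {0},
          (y ∈ C₁ ∨ z ∈ C₂) ∧ y + z = x}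
        smul_mem' := by
          rintro c hc _ ⟨y, hy, z, hz, hyz, rfl⟩
          exact ⟨c • y, smul_mem_union_zero hc hy, c • z, smul_mem_union_zero hc hz,
            hyz.imp (C₁.smul_mem hc) (C₂.smul_mem hc), (smul_add c y z).symm⟩
        add_mem' := by
          rintro _ ⟨y, hy, z, hz, hyz, rfl⟩ _ ⟨y', hy', z', hz', -, rfl⟩
          exact ⟨y + y', add_mem_union_zero hy hy', z + z', add_mem_union_zero hz hz',
            hyz.imp (add_mem_of_mem_union_zero · hy') (add_mem_of_mem_union_zero · hz'),
            add_add_add_comm y y' z z'⟩ }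
    have hJ : C₁ ⊔ C₂ ≤ J := sup_le
      (fun y hy => ⟨y, Or.inl hy, 0, Or.inr rfl, Or.inl hy, add_zero y⟩)
      (fun z hz => ⟨0, Or.inr rfl, z, Or.inl hz, Or.inr hz, zero_add z⟩)
    exact (hJ ·)
  · rintro ⟨y, hy, z, hz, hyz, rfl⟩
    have hle : ∀ {D : ConvexCone R M} {w : M}, D ≤ C₁ ⊔ C₂ → w ∈ (D : Set M) ∪ {0} →
        w ∈ ((C₁ ⊔ C₂ : ConvexCone R M) : Set M) ∪ {0} :=
      fun hD hw => hw.imp_left (hD ·)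
    rcases hyz with hy' | hz'
    · exact add_mem_of_mem_union_zero (le_sup_left (b := C₂) hy') (hle le_sup_right hz)
    · rw [add_comm]
      exact add_mem_of_mem_union_zero (le_sup_right (a := C₁) hz') (hle le_sup_left hy)

end ConvexCone

section Gambles

variable {Ω : Type*} {f g : Ω → ℝ}

lemma const_mem_gambles (t : ℝ) : (fun _ => t) ∈ Gambles Ω := ⟨|t|, fun _ => le_rfl⟩

lemma add_mem_gambles (hf : f ∈ Gambles Ω) (hg : g ∈ Gambles Ω) : f + g ∈ Gambles Ω := by
  obtain ⟨M, hM⟩ := hf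
  obtain ⟨N, hN⟩ := hg
  exact ⟨M + N, fun ω => (abs_add_le _ _).trans (add_le_add (hM ω) (hN ω))⟩

lemma smul_mem_gambles (c : ℝ) (hf : f ∈ Gambles Ω) : c • f ∈ Gambles Ω := by
  obtain ⟨M, hM⟩ := hf
  refine ⟨|c| * M, fun ω => ?_⟩
  rw [Pi.smul_apply, smul_eq_mul, abs_mul]
  exact mul_le_mul_of_nonneg_left (hM ω) (abs_nonneg c)

lemma indicator_mem_gambles (B : Set Ω) (hf : f ∈ Gambles Ω) : B.indicator f ∈ Gambles Ω := by
  obtain ⟨M, hM⟩ := hf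
  refine ⟨M, fun ω => ?_⟩
  by_cases hω : ω ∈ B
  · simpa [hω] using hM ω
  · simpa [hω] using (abs_nonneg _).trans (hM ω)

lemma indicator_const_mem_lpos {B : Set Ω} {ω : Ω} (hω : ω ∈ B) {t : ℝ} (ht : 0 < t) :
    B.indicator (fun _ => t) ∈ Lpos Ω :=
  ⟨indicator_mem_gambles B (const_mem_gambles t), indicator_nonneg (fun _ _ => ht.le),
    fun h => ht.ne' (by simpa [hω] using congrFun h ω)⟩

end Gambles

section Cones

variable {Ω : Type*}

def lposCone (Ω : Type*) : ConvexCone ℝ (Ω → ℝ) where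
  carrier := Lpos Ω
  smul_mem' c hc _ hf :=
    ⟨smul_mem_gambles c hf.1, smul_nonneg hc.le hf.2.1, smul_ne_zero hc.ne' hf.2.2⟩
  add_mem' _ hf _ hg :=
    ⟨add_mem_gambles hf.1 hg.1, add_nonneg hf.2.1 hg.2.1,
      fun h => hf.2.2 (le_antisymm ((le_add_of_nonneg_right hg.2.1).trans_eq h) hf.2.1)⟩

def lmeasCone (𝓑 : Set (Set Ω)) : ConvexCone ℝ (Ω → ℝ) where
  carrier := Lmeas 𝓑
  smul_mem' c _ _ hf := ⟨smul_mem_gambles c hf.1, fun B hB ω hω ω' hω' => by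
    simp only [Pi.smul_apply, hf.2 B hB ω hω ω' hω']⟩
  add_mem' _ hf _ hg := ⟨add_mem_gambles hf.1 hg.1, fun B hB ω hω ω' hω' => by
    simp only [Pi.add_apply, hf.2 B hB ω hω ω' hω', hg.2 B hB ω hω ω' hω']⟩

def lcondCone (B : Set Ω) : ConvexCone ℝ (Ω → ℝ) where
  carrier := Lcond B
  smul_mem' c _ f hf := ⟨smul_mem_gambles c hf.1, by
    conv_lhs => rw [hf.2]
    exact (indicator_const_smul B c f).symm⟩
  add_mem' f hf g hg := ⟨add_mem_gambles hf.1 hg.1, by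
    conv_lhs => rw [hf.2, hg.2]
    exact (indicator_add' B f g).symm⟩

end Cones

section Posi

variable {Ω : Type*} {G : Set (Ω → ℝ)} {f g : Ω → ℝ}

lemma smul_mem_posi {c : ℝ} (hc : 0 < c) (hf : f ∈ G) : c • f ∈ posi G :=
  ⟨0, fun _ => f, fun _ => c, fun _ => hf, fun _ => hc, by simp⟩

lemma mem_posi_of_mem (hf : f ∈ G) : f ∈ posi G := by
  simpa using smul_mem_posi one_pos hf

lemma add_mem_posi (hf : f ∈ G) (hg : g ∈ G) : f + g ∈ posi G :=
  ⟨1, ![f, g], fun _ => 1, by simp [Fin.forall_fin_two, hf, hg], fun _ => one_pos,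
    by simp [Fin.sum_univ_two]⟩

lemma posi_subset {C : ConvexCone ℝ (Ω → ℝ)} (hG : G ⊆ C) : posi G ⊆ C := by
  rintro _ ⟨n, f, l, hf, hl, rfl⟩
  exact Finset.sum_induction_nonempty _ (· ∈ C) (fun _ _ ha hb => C.add_mem ha hb)
    Finset.univ_nonempty fun i _ => C.smul_mem (hl i) (hG (hf i))

end Posi

section Coherence

variable {Ω : Type*} {κ : Set (Ω → ℝ) → Set (Ω → ℝ)} {D : Set (Ω → ℝ)} {f g : Ω → ℝ}

lemma AvoidsPartialLoss.not_le_zero (hD : AvoidsPartialLoss κ D) (hf : f ∈ natExt κ D)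
    (hfG : f ∈ Gambles Ω) : ¬ f ≤ 0 :=
  fun hle => (eq_empty_iff_forall_notMem.1 hD f) ⟨⟨hfG, hle⟩, hf⟩

lemma AvoidsPartialLoss.zero_notMem (hD : AvoidsPartialLoss posi D) : (0 : Ω → ℝ) ∉ D :=
  fun h0 => hD.not_le_zero (mem_posi_of_mem (Or.inl h0)) (const_mem_gambles 0) le_rfl

lemma AvoidsPartialLoss.not_add_le_zero (hD : AvoidsPartialLoss posi D) (hf : f ∈ D ∪ {0})
    (hg : g ∈ Lpos Ω) (hfg : f + g ∈ Gambles Ω) : ¬ f + g ≤ 0 := by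
  rcases hf with hf | rfl
  · exact hD.not_le_zero (add_mem_posi (Or.inl hf) (Or.inr hg)) hfg
  · rw [zero_add]
    exact fun hle => hg.2.2 (le_antisymm hle hg.2.1)

def CoherentRel.toConvexCone {Q : ConvexCone ℝ (Ω → ℝ)} (hDQ : D ⊆ Q)
    (hD : CoherentRel posi Q D) : ConvexCone ℝ (Ω → ℝ) where
  carrier := D
  smul_mem' _ hc _ hf := hD.2 ⟨Q.smul_mem hc (hDQ hf), smul_mem_posi hc (Or.inl hf)⟩
  add_mem' _ hf _ hg :=
    hD.2 ⟨Q.add_mem (hDQ hf) (hDQ hg), add_mem_posi (Or.inl hf) (Or.inl hg)⟩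

lemma IsClosureOp.coherent_natExt (hκ : IsClosureOp Ω κ) (hD : D ⊆ Gambles Ω)
    (hapl : AvoidsPartialLoss κ D) : Coherent κ (natExt κ D) := by
  have hDL : D ∪ Lpos Ω ⊆ Gambles Ω := union_subset hD fun f hf => hf.1
  refine ⟨hκ.maps_to _ hDL, ?_, ?_⟩
  · have hL : Lpos Ω ⊆ natExt κ D := fun f hf => hκ.extensive _ hDL (Or.inr hf)
    rw [union_eq_left.2 hL]
    exact hκ.idem _ hDL
  · rwa [inter_comm]

end Coherence

section MarginalExtension

variable {Ω : Type*} {𝓑 : Set (Set Ω)} {DB : Set (Ω → ℝ)} {Dc : Set Ω → Set (Ω → ℝ)}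
  {f g : Ω → ℝ}

lemma indicator_mem_of_mem_condAgg (hf : f ∈ condAgg 𝓑 Dc) {B : Set Ω} (hB : B ∈ 𝓑) {ω : Ω}
    (hω : ω ∈ B) (hfω : f ω ≠ 0) : B.indicator f ∈ Dc B :=
  (hf.2.2 B hB).resolve_right fun h =>
    hfω (by simpa [hω] using congrFun (mem_singleton_iff.1 h) ω)

def condAggCone (h𝓑 : ∀ ω, ∃ B ∈ 𝓑, ω ∈ B)
    (hDc : ∀ B ∈ 𝓑, ∃ C : ConvexCone ℝ (Ω → ℝ), C.Blunt ∧ (C : Set (Ω → ℝ)) = Dc B) :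
    ConvexCone ℝ (Ω → ℝ) where
  carrier := condAgg 𝓑 Dc
  smul_mem' c hc f hf := by
    refine ⟨smul_mem_gambles c hf.1, smul_ne_zero hc.ne' hf.2.1, fun B hB => ?_⟩
    obtain ⟨C, -, hC⟩ := hDc B hB
    rw [show B.indicator (c • f) = c • B.indicator f from indicator_const_smul B c f, ← hC]
    exact C.smul_mem_union_zero hc (hC ▸ hf.2.2 B hB)
  add_mem' f hf g hg := by
    refine ⟨add_mem_gambles hf.1 hg.1, fun h0 => ?_, fun B hB => ?_⟩
    · obtain ⟨ω, hω⟩ := Function.ne_iff.1 hf.2.1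
      obtain ⟨B, hB, hωB⟩ := h𝓑 ω
      obtain ⟨C, hCb, hC⟩ := hDc B hB
      have hfB : B.indicator f ∈ (C : Set (Ω → ℝ)) :=
        hC ▸ indicator_mem_of_mem_condAgg hf hB hωB hω
      have hfg : B.indicator (f + g) ∈ C := by
        rw [indicator_add']
        exact C.add_mem_of_mem_union_zero hfB (hC ▸ hg.2.2 B hB)
      rw [h0, indicator_zero'] at hfg
      exact hCb hfg
    · obtain ⟨C, -, hC⟩ := hDc B hB
      rw [indicator_add', ← hC]
      exact C.add_mem_union_zero (hC ▸ hf.2.2 B hB) (hC ▸ hg.2.2 B hB)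

lemma condAgg_not_le_zero (h𝓑 : ∀ ω, ∃ B ∈ 𝓑, ω ∈ B)
    (hDc : ∀ B ∈ 𝓑, AvoidsPartialLoss posi (Dc B)) (hf : f ∈ condAgg 𝓑 Dc) : ¬ f ≤ 0 := by
  intro hle
  obtain ⟨ω, hω⟩ := Function.ne_iff.1 hf.2.1
  obtain ⟨B, hB, hωB⟩ := h𝓑 ω
  have hfB : B.indicator f ∈ Dc B := indicator_mem_of_mem_condAgg hf hB hωB hω
  exact (hDc B hB).not_le_zero (mem_posi_of_mem (Or.inl hfB)) (indicator_mem_gambles B hf.1)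
    (indicator_nonpos fun ω _ => hle ω)

lemma add_condAgg_not_le_zero (h𝓑 : ∀ ω, ∃ B ∈ 𝓑, ω ∈ B) (hDB : DB ⊆ Lmeas 𝓑)
    (hDBapl : AvoidsPartialLoss posi DB) (hDc : ∀ B ∈ 𝓑, AvoidsPartialLoss posi (Dc B))
    (hf : f ∈ DB) (hg : g ∈ condAgg 𝓑 Dc ∪ {0}) : ¬ f + g ≤ 0 := by
  intro hle
  obtain ⟨ω, hω⟩ : ∃ ω, 0 < f ω := by
    by_contra! h
    exact hDBapl.not_le_zero (mem_posi_of_mem (Or.inl hf)) (hDB hf).1 h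
  obtain ⟨B, hB, hωB⟩ := h𝓑 ω
  obtain ⟨hgG, hgB⟩ : g ∈ Gambles Ω ∧ B.indicator g ∈ Dc B ∪ {0} := by
    rcases hg with hg | rfl
    exacts [⟨hg.1, hg.2.2 B hB⟩, ⟨const_mem_gambles 0, Or.inr (indicator_zero' ℝ)⟩]
  have hsplit : B.indicator (f + g) = B.indicator g + B.indicator (fun _ => f ω) := by
    ext ω'
    by_cases hω' : ω' ∈ B
    · simp [hω', (hDB hf).2 B hB ω' hω' ω hωB, add_comm]
    · simp [hω']
  refine (hDc B hB).not_add_le_zero hgB (indicator_const_mem_lpos hωB hω) ?_ ?_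
  · rw [← hsplit]
    exact indicator_mem_gambles B (add_mem_gambles (hDB hf).1 hgG)
  · rw [← hsplit]
    exact indicator_nonpos fun ω' _ => hle ω'

lemma not_le_zero_of_mem_sup_lposCone {C : ConvexCone ℝ (Ω → ℝ)} (hC : ∀ f ∈ C, ¬ f ≤ 0) :
    ∀ f ∈ C ⊔ lposCone Ω, ¬ f ≤ 0 := by
  intro _ hf hle
  obtain ⟨g, hg, p, hp, hgp, rfl⟩ := ConvexCone.mem_sup_iff.1 hf
  have hp0 : 0 ≤ p := by
    rcases hp with hp | rfl
    exacts [hp.2.1, le_rfl]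
  rcases hg with hg | rfl
  · exact hC g hg ((le_add_of_nonneg_right hp0).trans hle)
  · rcases hgp with h0 | hp
    · exact hC 0 h0 le_rfl
    · exact hp.2.2 (le_antisymm (by simpa using hle) hp0)

theorem avoidsPartialLoss_posi_union_condAgg (h𝓑 : ∀ ω, ∃ B ∈ 𝓑, ω ∈ B)
    (hDB : DB ⊆ Lmeas 𝓑) (hDBcoh : CoherentRel posi (Lmeas 𝓑) DB)
    (hDc : ∀ B ∈ 𝓑, Dc B ⊆ Lcond B ∧ CoherentRel posi (Lcond B) (Dc B)) :
    AvoidsPartialLoss posi (DB ∪ condAgg 𝓑 Dc) := by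
  have hapl : ∀ B ∈ 𝓑, AvoidsPartialLoss posi (Dc B) := fun B hB => (hDc B hB).2.1
  let CDB := hDBcoh.toConvexCone (Q := lmeasCone 𝓑) hDB
  let CDc := condAggCone h𝓑 fun B hB =>
    ⟨(hDc B hB).2.toConvexCone (Q := lcondCone B) (hDc B hB).1, (hapl B hB).zero_notMem, rfl⟩
  have hsup : ∀ f ∈ CDB ⊔ CDc, ¬ f ≤ 0 := by
    intro _ hf
    obtain ⟨h, hh, c, hc, hhc, rfl⟩ := ConvexCone.mem_sup_iff.1 hf
    rcases hh with hh | rfl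
    · exact add_condAgg_not_le_zero h𝓑 hDB hDBcoh.1 hapl hh hc
    · rcases hhc with h0 | hc
      · exact add_condAgg_not_le_zero h𝓑 hDB hDBcoh.1 hapl h0 hc
      · rw [zero_add]
        exact condAgg_not_le_zero h𝓑 hapl hc
  have hgen : DB ∪ condAgg 𝓑 Dc ∪ Lpos Ω ⊆ ↑(CDB ⊔ CDc ⊔ lposCone Ω) :=
    union_subset (union_subset (le_sup_left.trans le_sup_left : CDB ≤ _)
      (le_sup_right.trans le_sup_left : CDc ≤ _)) (le_sup_right : lposCone Ω ≤ _)
  refine eq_empty_iff_forall_notMem.2 fun f ⟨⟨_, hle⟩, hf⟩ => ?_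
  exact not_le_zero_of_mem_sup_lposCone hsup f (posi_subset hgen hf) hle

end MarginalExtension

theorem stmt10_general {Ω : Type*} (𝓑 : Set (Set Ω)) (hpart : Setoid.IsPartition 𝓑)
    (κ : Set (Ω → ℝ) → Set (Ω → ℝ)) (hκ : InKd κ)
    (hdom : ∀ G ⊆ Gambles Ω, natExt κ G ⊆ natExt posi G)
    (DB : Set (Ω → ℝ)) (hDBsub : DB ⊆ Lmeas 𝓑)
    (hDBcoh : CoherentRel posi (Lmeas 𝓑) DB)
    (Dc : Set Ω → Set (Ω → ℝ))
    (hDc : ∀ B ∈ 𝓑, Dc B ⊆ Lcond B ∧ CoherentRel posi (Lcond B) (Dc B)) :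
    Coherent κ (natExt κ (DB ∪ condAgg 𝓑 Dc)) := by
  have hS : DB ∪ condAgg 𝓑 Dc ⊆ Gambles Ω :=
    union_subset (fun f hf => (hDBsub hf).1) fun f hf => hf.1
  have hapl : AvoidsPartialLoss posi (DB ∪ condAgg 𝓑 Dc) :=
    avoidsPartialLoss_posi_union_condAgg (fun ω => (hpart.2 ω).exists) hDBsub hDBcoh hDc
  exact hκ.1.coherent_natExt hS (subset_eq_empty (inter_subset_inter_right _ (hdom _ hS)) hapl)

/-- under the stated conditions, the marginal extension
`D' = E_κ(D_𝓑 ∪ D|𝓑)` is κ-coherent. -/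
theorem stmt10 {Ω : Type*} [Nonempty Ω] (𝓑 : Set (Set Ω)) (hpart : Setoid.IsPartition 𝓑)
    (κ : Set (Ω → ℝ) → Set (Ω → ℝ)) (hκ : InKd κ)
    (hdom : ∀ G ⊆ Gambles Ω, natExt κ G ⊆ natExt posi G)
    (DB : Set (Ω → ℝ)) (hDBsub : DB ⊆ Lmeas 𝓑)
    (hDBcoh : CoherentRel posi (Lmeas 𝓑) DB)
    (Dc : Set Ω → Set (Ω → ℝ))
    (hDc : ∀ B ∈ 𝓑, Dc B ⊆ Lcond B ∧ CoherentRel posi (Lcond B) (Dc B)) :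
    Coherent κ (natExt κ (DB ∪ condAgg 𝓑 Dc)) :=
  stmt10_general 𝓑 hpart κ hκ hdom DB hDBsub hDBcoh Dc hDc
end

section
/- Let κ ∈ K_d and let D ⊆ L be κ-coherent, with induced lower prevision P_D(f) := sup{μ ∈ ℝ : f − μ ∈ D} and upper prevision Q_D(f) := inf{μ ∈ ℝ : μ − f ∈ D}. Then P_D(f) ≤ Q_D(f) holds for every gamble f if and only if there do not exist g₁, g₂ ∈ D and ε > 0 such that g₁ + g₂ is the constant gamble with value −ε. -/
open Set

/-! Since `μ - f = -f - μ`, the upper prevision is conjugate to the lower one: `Q_D(f) = -P_D(-f)`.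
So `P_D ≤ Q_D` fails at `f` exactly when `P_D(f) + P_D(-f) > 0`, i.e. when there are prices `a`, `b`
with `a + b > 0`, `f - a ∈ D` and `-f - b ∈ D`; these two gambles sum to the constant `-(a + b)`. -/

section

variable {Ω : Type*} {κ : Set (Ω → ℝ) → Set (Ω → ℝ)} {D : Set (Ω → ℝ)} {f : Ω → ℝ}

lemma neg_mem_gambles (hf : f ∈ Gambles Ω) : -f ∈ Gambles Ω := by
  obtain ⟨M, hM⟩ := hf
  exact ⟨M, fun ω => by simpa using hM ω⟩

lemma sub_const_mem_gambles (hf : f ∈ Gambles Ω) (c : ℝ) : (f - fun _ => c) ∈ Gambles Ω := by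
  obtain ⟨M, hM⟩ := hf
  exact ⟨M + |c|, fun ω => (abs_sub _ _).trans (by linarith [hM ω])⟩

lemma mem_Lpos_of_pos [Nonempty Ω] {g : Ω → ℝ} (hg : g ∈ Gambles Ω) (hpos : ∀ ω, 0 < g ω) :
    g ∈ Lpos Ω :=
  ⟨hg, fun ω => (hpos ω).le, fun h => (hpos (Classical.arbitrary Ω)).ne' (congrFun h _)⟩

lemma upPrev_eq_neg_lowPrev_neg (D : Set (Ω → ℝ)) (f : Ω → ℝ) :
    upPrev D f = -lowPrev D (-f) := by
  rw [upPrev, lowPrev, Real.sInf_def]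
  congr 2
  ext μ
  simp only [Set.mem_neg, Set.mem_ofPred_eq]
  congr! 1
  funext ω
  simp only [Pi.sub_apply, Pi.neg_apply]
  ring

namespace Coherent

lemma Lpos_subset (hκ : IsClosureOp Ω κ) (hD : Coherent κ D) : Lpos Ω ⊆ D := by
  have hext := hκ.extensive _ (union_subset hD.1 fun _ (hg : _ ∈ Lpos Ω) => hg.1)
  rw [hD.2.1] at hext
  exact subset_union_right.trans hext

lemma exists_pos_of_mem (hD : Coherent κ D) {g : Ω → ℝ} (hg : g ∈ D) : ∃ ω, 0 < g ω := by
  by_contra! hle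
  exact (Set.eq_empty_iff_forall_notMem.mp hD.2.2) g ⟨hg, hD.1 hg, hle⟩

lemma bddAbove_lowPrev_set (hD : Coherent κ D) (hf : f ∈ Gambles Ω) :
    BddAbove {μ : ℝ | (f - fun _ => μ) ∈ D} := by
  obtain ⟨M, hM⟩ := hf
  refine ⟨M, fun μ hμ => ?_⟩
  obtain ⟨ω, hω⟩ := hD.exists_pos_of_mem hμ
  have := (abs_le.mp (hM ω)).2
  simp only [Pi.sub_apply] at hω
  linarith

lemma lowPrev_set_nonempty [Nonempty Ω] (hκ : IsClosureOp Ω κ) (hD : Coherent κ D)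
    (hf : f ∈ Gambles Ω) : {μ : ℝ | (f - fun _ => μ) ∈ D}.Nonempty := by
  obtain ⟨M, hM⟩ := hf
  refine ⟨-(M + 1), hD.Lpos_subset hκ (mem_Lpos_of_pos (sub_const_mem_gambles ⟨M, hM⟩ _) ?_)⟩
  intro ω
  have := (abs_le.mp (hM ω)).1
  simp only [Pi.sub_apply]
  linarith

lemma le_lowPrev (hD : Coherent κ D) (hf : f ∈ Gambles Ω) {μ : ℝ} (hμ : (f - fun _ => μ) ∈ D) :
    μ ≤ lowPrev D f :=
  le_csSup (hD.bddAbove_lowPrev_set hf) hμ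

lemma exists_sub_mem_of_lt_lowPrev [Nonempty Ω] (hκ : IsClosureOp Ω κ) (hD : Coherent κ D)
    (hf : f ∈ Gambles Ω) {μ : ℝ} (hμ : μ < lowPrev D f) :
    ∃ a, μ < a ∧ (f - fun _ => a) ∈ D := by
  obtain ⟨a, ha, hμa⟩ := exists_lt_of_lt_csSup (hD.lowPrev_set_nonempty hκ hf) hμ
  exact ⟨a, hμa, ha⟩

end Coherent

end

/-- `P_D(f) ≤ Q_D(f)` for every gamble `f` iff there are no
`g₁, g₂ ∈ D` and `ε > 0` with `g₁ + g₂ = -ε` (constant). -/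
theorem stmt12 {Ω : Type*} [Nonempty Ω] (κ : Set (Ω → ℝ) → Set (Ω → ℝ))
    (hκ : InKd κ) (D : Set (Ω → ℝ)) (hD : Coherent κ D) :
    (∀ f ∈ Gambles Ω, lowPrev D f ≤ upPrev D f) ↔
      ¬ ∃ g₁ ∈ D, ∃ g₂ ∈ D, ∃ ε : ℝ, 0 < ε ∧ g₁ + g₂ = (fun _ => -ε) := by
  simp only [upPrev_eq_neg_lowPrev_neg]
  constructor
  · rintro h ⟨g₁, hg₁, g₂, hg₂, ε, hε, hsum⟩
    have hg : g₁ ∈ Gambles Ω := hD.1 hg₁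
    have hg₂' : (-g₁ - fun _ => ε) = g₂ := by
      rw [← sub_eq_of_eq_add' hsum.symm]
      funext ω
      simp only [Pi.sub_apply, Pi.neg_apply]
      ring
    have h₁ : 0 ≤ lowPrev D g₁ := hD.le_lowPrev hg ((sub_zero g₁).symm ▸ hg₁)
    have h₂ : ε ≤ lowPrev D (-g₁) := hD.le_lowPrev (neg_mem_gambles hg) (hg₂' ▸ hg₂)
    linarith [h g₁ hg]
  · intro h f hf
    by_contra! hlt
    obtain ⟨a, ha, hfa⟩ := hD.exists_sub_mem_of_lt_lowPrev hκ.1 hf hlt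
    obtain ⟨b, hb, hfb⟩ :=
      hD.exists_sub_mem_of_lt_lowPrev hκ.1 (neg_mem_gambles hf) (show -a < lowPrev D (-f) by linarith)
    refine h ⟨_, hfa, _, hfb, a + b, by linarith, ?_⟩
    funext ω
    simp only [Pi.add_apply, Pi.sub_apply, Pi.neg_apply]
    ring
end

section
/- Let κ ∈ K_d and let D ⊆ L be κ-coherent and closed under addition (f, g ∈ D implies f + g ∈ D). Then there exists a linear prevision P — a linear functional on the space of bounded real-valued functions on Ω that is monotone (f ≤ g implies P(f) ≤ P(g)) and satisfies P(1) = 1 — such that P(f) ≥ 0 for every f ∈ D. -/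
open Set

/-- A linear prevision: a linear functional on the bounded functions on `Ω` that is
monotone and maps the constant gamble `1` to `1`. -/
def IsLinPrev {Ω : Type*} (P : (Ω → ℝ) → ℝ) : Prop :=
  (∀ f g : Ω → ℝ, f ∈ Gambles Ω → g ∈ Gambles Ω → P (f + g) = P f + P g) ∧
  (∀ (c : ℝ) (f : Ω → ℝ), f ∈ Gambles Ω → P (c • f) = c * P f) ∧
  (∀ f g : Ω → ℝ, f ∈ Gambles Ω → g ∈ Gambles Ω → f ≤ g → P f ≤ P g) ∧
  P (fun _ => 1) = 1

/-!
Together with `0`, the elements of `D` form an additive monoid `S` whose elements are each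
nonnegative somewhere (by coherence, no element of `D` is `≤ 0`). Dividing by positive integers
gives a cone over `ℚ≥0`; allowing a uniform slack `ε > 0` turns it into a genuine real cone `C`
that contains every nonnegative function but no negative constant. Taking the constant `1` as
an order unit, the Riesz extension theorem extends `c • 1 ↦ c` to a linear functional on the
gambles that is nonnegative on `C`: this is a linear prevision, nonnegative on `D ⊆ C`.
-/

def gamblesSubmodule (Ω : Type*) : Submodule ℝ (Ω → ℝ) where
  carrier := Gambles Ω
  zero_mem' := ⟨0, by simp⟩
  add_mem' := by
    rintro f g ⟨M, hM⟩ ⟨N, hN⟩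
    exact ⟨M + N, fun ω => (abs_add_le _ _).trans (add_le_add (hM ω) (hN ω))⟩
  smul_mem' := by
    rintro c f ⟨M, hM⟩
    refine ⟨|c| * M, fun ω => ?_⟩
    simpa [abs_mul] using mul_le_mul_of_nonneg_left (hM ω) (abs_nonneg c)

theorem exists_linearMap_nonneg_of_orderUnit {E : Type*} [AddCommGroup E] [Module ℝ E]
    (C : PointedCone ℝ E) (e : E) (hdense : ∀ y, ∃ c : ℝ, c • e + y ∈ C)
    (hpos : ∀ c : ℝ, c • e ∈ C → 0 ≤ c) :
    ∃ g : E →ₗ[ℝ] ℝ, g e = 1 ∧ ∀ x ∈ C, 0 ≤ g x := by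
  have he : e ≠ 0 := fun he => by
    have := hpos (-1) (by simp [he])
    norm_num at this
  let f₀ : E →ₗ.[ℝ] ℝ := LinearPMap.mkSpanSingleton e 1 he
  have hf₀ : ∀ (c : ℝ) (h : c • e ∈ f₀.domain), f₀ ⟨c • e, h⟩ = c := fun c h =>
    (LinearPMap.mkSpanSingleton'_apply e (1 : ℝ) _ c h).trans (mul_one c)
  obtain ⟨g, hgf, hgC⟩ := riesz_extension C f₀
    (fun ⟨x, hx⟩ hxC => by
      obtain ⟨c, rfl⟩ := Submodule.mem_span_singleton.mp hx
      exact (hf₀ c hx).symm ▸ hpos c hxC)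
    (fun y => by
      obtain ⟨c, hc⟩ := hdense y
      exact ⟨⟨c • e, Submodule.smul_mem _ c (Submodule.mem_span_singleton_self e)⟩, hc⟩)
  exact ⟨g, (hgf _).trans (LinearPMap.mkSpanSingleton_apply ℝ ℝ he 1), hgC⟩

theorem exists_isLinPrev_nonneg_on_pointedCone {Ω : Type*} (C : PointedCone ℝ (Ω → ℝ))
    (hnonneg : ∀ f ∈ Gambles Ω, 0 ≤ f → f ∈ C) (hconst : ∀ c : ℝ, (fun _ => c) ∈ C → 0 ≤ c) :
    ∃ P : (Ω → ℝ) → ℝ, IsLinPrev P ∧ ∀ f ∈ C, f ∈ Gambles Ω → 0 ≤ P f := by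
  set E := gamblesSubmodule Ω
  have hone : (fun _ => (1 : ℝ)) ∈ E := ⟨1, fun _ => by simp⟩
  obtain ⟨g, hg1, hgC⟩ := exists_linearMap_nonneg_of_orderUnit (C.comap E.subtype) ⟨_, hone⟩
    (fun ⟨y, M, hM⟩ => ⟨M, hnonneg _ (E.add_mem (E.smul_mem M hone) ⟨M, hM⟩) fun ω => by
      simpa [neg_le_iff_add_nonneg, add_comm] using neg_le_of_abs_le (hM ω)⟩)
    (fun c hc => hconst c (by simpa [PointedCone.mem_comap, Pi.smul_def] using hc))
  obtain ⟨P, hP⟩ := LinearMap.exists_extend g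
  have hPg : ∀ f (hf : f ∈ E), P f = g ⟨f, hf⟩ := fun f hf => LinearMap.congr_fun hP ⟨f, hf⟩
  have hPC : ∀ f ∈ C, f ∈ Gambles Ω → 0 ≤ P f := fun f hfC hf =>
    (hPg f hf).symm ▸ hgC ⟨f, hf⟩ (PointedCone.mem_comap.mpr hfC)
  refine ⟨P, ⟨fun f g _ _ => map_add P f g, fun c f _ => map_smul P c f, ?_, ?_⟩, hPC⟩
  · intro f h hf hh hfh
    have := hPC (h - f) (hnonneg _ (E.sub_mem hh hf) (sub_nonneg.mpr hfh)) (E.sub_mem hh hf)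
    rw [map_sub] at this
    linarith
  · exact (hPg _ hone).trans hg1

def insertZeroAddSubmonoid {M : Type*} [AddMonoid M] (D : Set M)
    (hadd : ∀ f ∈ D, ∀ g ∈ D, f + g ∈ D) : AddSubmonoid M where
  carrier := insert 0 D
  zero_mem' := mem_insert 0 D
  add_mem' {f g} hf hg := by
    rcases hf with rfl | hf
    · simpa using hg
    rcases hg with rfl | hg
    · simpa using Or.inr hf
    · exact Or.inr (hadd f hf g hg)

def divHull {M : Type*} [AddCommMonoid M] (S : AddSubmonoid M) : AddSubmonoid M where
  carrier := {a | ∃ n : ℕ, 0 < n ∧ n • a ∈ S}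
  zero_mem' := ⟨1, one_pos, by simp⟩
  add_mem' := by
    rintro a b ⟨n, hn, ha⟩ ⟨m, hm, hb⟩
    refine ⟨m * n, Nat.mul_pos hm hn, ?_⟩
    rw [smul_add, mul_smul, mul_comm, mul_smul]
    exact S.add_mem (S.nsmul_mem ha m) (S.nsmul_mem hb n)

section divHull

variable {M : Type*} [AddCommMonoid M] [Module ℝ M] {S : AddSubmonoid M}

theorem div_smul_mem_divHull {a : M} (ha : a ∈ divHull S) (m : ℕ) {k : ℕ} (hk : 0 < k) :
    ((m : ℝ) / k) • a ∈ divHull S := by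
  obtain ⟨n, hn, hna⟩ := ha
  refine ⟨k * n, Nat.mul_pos hk hn, ?_⟩
  have : (k * n) • (((m : ℝ) / k) • a) = m • n • a := by
    simp only [← Nat.cast_smul_eq_nsmul ℝ, smul_smul]
    congr 1
    field_simp
    push_cast
    ring
  exact this ▸ S.nsmul_mem hna m

theorem divHull_le_of_le {p : Submodule ℝ M} (h : S ≤ p.toAddSubmonoid) :
    divHull S ≤ p.toAddSubmonoid := by
  rintro a ⟨n, hn, hna⟩
  have : a = (n : ℝ)⁻¹ • n • a := by
    rw [← Nat.cast_smul_eq_nsmul ℝ, smul_smul, inv_mul_cancel₀ (by positivity), one_smul]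
  exact this ▸ p.smul_mem _ (h hna)

end divHull

theorem exists_nonneg_of_mem_divHull {Ω : Type*} {S : AddSubmonoid (Ω → ℝ)}
    (hS : ∀ s ∈ S, ∃ ω, 0 ≤ s ω) {a : Ω → ℝ} (ha : a ∈ divHull S) : ∃ ω, 0 ≤ a ω := by
  obtain ⟨n, hn, hna⟩ := ha
  obtain ⟨ω, hω⟩ := hS _ hna
  refine ⟨ω, (mul_nonneg_iff_of_pos_left (Nat.cast_pos.mpr hn)).mp ?_⟩
  simpa using hω

theorem exists_nat_div_smul_le {Ω : Type*} {f : Ω → ℝ} (hf : f ∈ Gambles Ω) {c : ℝ}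
    (hc : 0 ≤ c) {ε : ℝ} (hε : 0 < ε) :
    ∃ m k : ℕ, 0 < k ∧ ((m : ℝ) / k) • f ≤ c • f + fun _ => ε := by
  obtain ⟨M, hM⟩ := hf
  obtain ⟨k, hk⟩ := exists_nat_gt (max (M / ε) 0)
  have hk0 : (0 : ℝ) < k := (le_max_right _ _).trans_lt hk
  set m := ⌊c * k⌋₊
  have hdk : (c - m / k) * k = c * k - m := by field_simp
  have hd0 : 0 ≤ c - m / k := by
    nlinarith [Nat.floor_le (mul_nonneg hc hk0.le)]
  have hd1 : c - m / k ≤ 1 / k := by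
    rw [le_div_iff₀ hk0, hdk]
    linarith [Nat.lt_floor_add_one (c * k)]
  have hMk : M / k < ε := by
    rw [div_lt_iff₀ hk0, mul_comm, ← div_lt_iff₀ hε]
    exact (le_max_left _ _).trans_lt hk
  refine ⟨m, k, Nat.cast_pos.mp hk0, fun ω => ?_⟩
  have hfω := abs_le.mp (hM ω)
  calc ((m : ℝ) / k) * f ω = c * f ω + (c - m / k) * -f ω := by ring
    _ ≤ c * f ω + (c - m / k) * M := by gcongr; linarith
    _ ≤ c * f ω + 1 / k * M := by gcongr; linarith
    _ ≤ c * f ω + ε := by rw [one_div_mul_eq_div]; linarith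

/-- The slack `ε` makes this closed under real scalars: for bounded `a` and `c ≥ 0`, some
`(m / k) • a ∈ divHull S` lies below `c • a + ε`. -/
def nearDominatingCone {Ω : Type*} (S : AddSubmonoid (Ω → ℝ))
    (hS : S ≤ (gamblesSubmodule Ω).toAddSubmonoid) : PointedCone ℝ (Ω → ℝ) where
  carrier := {x | ∀ ε > 0, ∃ a ∈ divHull S, a ≤ x + fun _ => ε}
  zero_mem' ε hε := ⟨0, zero_mem _, fun _ => by simpa using hε.le⟩
  add_mem' {x y} hx hy ε hε := by
    obtain ⟨a, ha, hax⟩ := hx (ε / 2) (by positivity)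
    obtain ⟨b, hb, hby⟩ := hy (ε / 2) (by positivity)
    refine ⟨a + b, add_mem ha hb, fun ω => ?_⟩
    have := hax ω
    have := hby ω
    simp only [Pi.add_apply] at *
    linarith
  smul_mem' := by
    rintro ⟨c, hc⟩ x hx ε hε
    obtain ⟨a, ha, hax⟩ := hx (ε / (2 * (c + 1))) (by positivity)
    obtain ⟨m, k, hk, hmk⟩ :=
      exists_nat_div_smul_le (divHull_le_of_le hS ha) hc (half_pos hε)
    refine ⟨((m : ℝ) / k) • a, div_smul_mem_divHull ha m hk, fun ω => ?_⟩
    have hcax : c * a ω ≤ c * (x ω + ε / (2 * (c + 1))) := by gcongr; exact hax ω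
    have hcε : c * (ε / (2 * (c + 1))) ≤ ε / 2 := by
      rw [mul_div_assoc', div_le_div_iff₀ (by positivity) two_pos]
      nlinarith
    have hmkω : (m / k : ℝ) * a ω ≤ c * a ω + ε / 2 := hmk ω
    show (m / k : ℝ) * a ω ≤ c * x ω + ε
    linarith [mul_add c (x ω) (ε / (2 * (c + 1)))]

section nearDominatingCone

variable {Ω : Type*} {S : AddSubmonoid (Ω → ℝ)} (hS : S ≤ (gamblesSubmodule Ω).toAddSubmonoid)

theorem mem_nearDominatingCone_of_nonneg {x : Ω → ℝ} (hx : 0 ≤ x) :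
    x ∈ nearDominatingCone S hS := fun ε hε =>
  ⟨0, zero_mem _, fun ω => by simpa using add_nonneg (hx ω) hε.le⟩

theorem mem_nearDominatingCone_of_mem {s : Ω → ℝ} (hs : s ∈ S) :
    s ∈ nearDominatingCone S hS := fun ε hε =>
  ⟨s, ⟨1, one_pos, by simpa using hs⟩, fun ω => by simpa using hε.le⟩

theorem nonneg_of_const_mem_nearDominatingCone (hpos : ∀ s ∈ S, ∃ ω, 0 ≤ s ω) {c : ℝ}
    (hc : (fun _ => c) ∈ nearDominatingCone S hS) : 0 ≤ c := by
  refine le_of_forall_pos_le_add fun ε hε => ?_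
  obtain ⟨a, ha, hac⟩ := hc ε hε
  obtain ⟨ω, hω⟩ := exists_nonneg_of_mem_divHull hpos ha
  simpa using hω.trans (hac ω)

end nearDominatingCone

theorem stmt18_general {Ω : Type*} [Nonempty Ω] (κ : Set (Ω → ℝ) → Set (Ω → ℝ))
    (D : Set (Ω → ℝ)) (hD : Coherent κ D)
    (hadd : ∀ f ∈ D, ∀ g ∈ D, f + g ∈ D) :
    ∃ P : (Ω → ℝ) → ℝ, IsLinPrev P ∧ ∀ f ∈ D, 0 ≤ P f := by
  obtain ⟨hDG, -, hdisj⟩ := hD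
  set S := insertZeroAddSubmonoid D hadd
  have hSG : S ≤ (gamblesSubmodule Ω).toAddSubmonoid := by
    rintro s (rfl | hs)
    exacts [zero_mem _, hDG hs]
  have hSpos : ∀ s ∈ S, ∃ ω, 0 ≤ s ω := by
    rintro s (rfl | hs)
    · exact ⟨Classical.arbitrary Ω, le_rfl⟩
    · by_contra! hneg
      exact hdisj.subset ⟨hs, hDG hs, fun ω => (hneg ω).le⟩
  obtain ⟨P, hP, hPC⟩ := exists_isLinPrev_nonneg_on_pointedCone (nearDominatingCone S hSG)
    (fun _ _ hf => mem_nearDominatingCone_of_nonneg hSG hf)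
    (fun _ hc => nonneg_of_const_mem_nearDominatingCone hSG hSpos hc)
  exact ⟨P, hP, fun f hf => hPC f (mem_nearDominatingCone_of_mem hSG (Or.inr hf)) (hDG hf)⟩

/-- if `D` is κ-coherent for `κ ∈ K_d` and closed under addition, then
there is a linear prevision that is nonnegative on `D`. -/
theorem stmt18 {Ω : Type*} [Nonempty Ω] (κ : Set (Ω → ℝ) → Set (Ω → ℝ))
    (hκ : InKd κ) (D : Set (Ω → ℝ)) (hD : Coherent κ D)
    (hadd : ∀ f ∈ D, ∀ g ∈ D, f + g ∈ D) :
    ∃ P : (Ω → ℝ) → ℝ, IsLinPrev P ∧ ∀ f ∈ D, 0 ≤ P f :=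
  stmt18_general κ D hD hadd
end

section
/- Let κ ∈ K_d, let D ⊆ L be κ-coherent, and let P_D(f) := sup{μ ∈ ℝ : f − μ ∈ D} be the induced lower prevision. Let B ⊆ Ω be nonempty with P_D(1_B) > 0. Then for every gamble f, taking suprema in the extended reals, sup{μ ∈ ℝ : P_D(1_B·(f − μ)) > 0} ≤ sup{μ ∈ ℝ : 1_B·(f − μ) ∈ D} ≤ sup{μ ∈ ℝ : P_D(1_B·(f − μ)) ≥ 0}. -/
open Set

/-! Both inequalities are inclusions between the sets of `μ`. If `P_D(g) > 0`, then `g - ν ∈ D`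
for some `ν > 0`, and `g` dominates it, so `g ∈ D` because `κ ∈ K_d`. Conversely `g ∈ D` means
`g - 0 ∈ D`, so `P_D(g) ≥ 0`. -/

theorem Gambles.sub_const {Ω : Type*} {f : Ω → ℝ} (hf : f ∈ Gambles Ω) (μ : ℝ) :
    (f - fun _ => μ) ∈ Gambles Ω := by
  obtain ⟨M, hM⟩ := hf
  refine ⟨M + |μ|, fun ω => ?_⟩
  calc |f ω - μ| ≤ |f ω| + |μ| := abs_sub _ _
    _ ≤ M + |μ| := by linarith [hM ω]

theorem Gambles.indicator {Ω : Type*} {f : Ω → ℝ} (hf : f ∈ Gambles Ω) (B : Set Ω) :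
    B.indicator f ∈ Gambles Ω := by
  obtain ⟨M, hM⟩ := hf
  refine ⟨M, fun ω => ?_⟩
  by_cases hω : ω ∈ B
  · simpa [hω] using hM ω
  · simpa [hω] using (abs_nonneg _).trans (hM ω)

theorem ClosedUnderDominance.mem_of_le {Ω : Type*} {G : Set (Ω → ℝ)}
    (hG : ClosedUnderDominance G) {f g : Ω → ℝ} (hf : f ∈ G) (hg : g ∈ Gambles Ω)
    (hfg : f ≤ g) : g ∈ G := by
  rw [hG]
  exact ⟨hg, f, hf, hfg⟩

theorem lowPrev_nonneg_of_mem {Ω : Type*} {D : Set (Ω → ℝ)} {g : Ω → ℝ} (hg : g ∈ D) :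
    0 ≤ lowPrev D g :=
  Real.sSup_nonneg' ⟨0, by rwa [mem_ofPred_eq, ← Pi.zero_def, sub_zero], le_rfl⟩

theorem ClosedUnderDominance.mem_of_lowPrev_pos {Ω : Type*} {D : Set (Ω → ℝ)}
    (hD : ClosedUnderDominance D) {g : Ω → ℝ} (hg : g ∈ Gambles Ω) (hpos : 0 < lowPrev D g) :
    g ∈ D := by
  obtain ⟨ν, hν, hν_pos⟩ : ∃ ν, (g - fun _ => ν) ∈ D ∧ 0 < ν := by
    -- otherwise `sSup ≤ 0`, also when the set is empty (`sSup ∅ = 0`)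
    by_contra! h
    exact (Real.sSup_le (fun ν hν => h ν hν) le_rfl).not_gt hpos
  exact hD.mem_of_le hν hg fun ω => by simp only [Pi.sub_apply]; linarith

theorem stmt19_general {Ω : Type*} (κ : Set (Ω → ℝ) → Set (Ω → ℝ))
    (hκ : InKd κ) (D : Set (Ω → ℝ)) (hD : Coherent κ D)
    (B : Set Ω)
    (f : Ω → ℝ) (hf : f ∈ Gambles Ω) :
    sSup (Real.toEReal '' {μ : ℝ | 0 < lowPrev D (B.indicator (f - fun _ => μ))}) ≤
        sSup (Real.toEReal '' {μ : ℝ | B.indicator (f - fun _ => μ) ∈ D}) ∧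
      sSup (Real.toEReal '' {μ : ℝ | B.indicator (f - fun _ => μ) ∈ D}) ≤
        sSup (Real.toEReal '' {μ : ℝ | 0 ≤ lowPrev D (B.indicator (f - fun _ => μ))}) := by
  have hdom : ClosedUnderDominance D := hκ.2 D hD
  refine ⟨sSup_le_sSup (image_mono fun μ hμ => ?_),
    sSup_le_sSup (image_mono fun μ hμ => lowPrev_nonneg_of_mem hμ)⟩
  exact hdom.mem_of_lowPrev_pos (Gambles.indicator (Gambles.sub_const hf μ) B) hμ

/-- generalised Bayes rule bounds, with suprema in the extended reals:
`sup {μ : P_D(1_B(f-μ)) > 0} ≤ sup {μ : 1_B(f-μ) ∈ D} ≤ sup {μ : P_D(1_B(f-μ)) ≥ 0}`. -/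
theorem stmt19 {Ω : Type*} [Nonempty Ω] (κ : Set (Ω → ℝ) → Set (Ω → ℝ))
    (hκ : InKd κ) (D : Set (Ω → ℝ)) (hD : Coherent κ D)
    (B : Set Ω) (hB : B.Nonempty)
    (hPB : 0 < lowPrev D (B.indicator fun _ => (1 : ℝ)))
    (f : Ω → ℝ) (hf : f ∈ Gambles Ω) :
    sSup (Real.toEReal '' {μ : ℝ | 0 < lowPrev D (B.indicator (f - fun _ => μ))}) ≤
        sSup (Real.toEReal '' {μ : ℝ | B.indicator (f - fun _ => μ) ∈ D}) ∧
      sSup (Real.toEReal '' {μ : ℝ | B.indicator (f - fun _ => μ) ∈ D}) ≤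
        sSup (Real.toEReal '' {μ : ℝ | 0 ≤ lowPrev D (B.indicator (f - fun _ => μ))}) :=
  stmt19_general κ hκ D hD B f hf
end
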